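/- arXiv:1407.5337 — 2 statements merged into one kernel-verified Lean document; each statement's English description precedes it below -/
import Mathlib

section
/- Let D be a bounded operator on ℓ²(ℕ), Λ ⊂ ℕ, and let 𝒲 be a closed subspace of ℓ²(ℕ) with 𝒲 ⊇ Null(P_Λ D). Assume P_Λ D admits a bounded Moore–Penrose pseudoinverse (P_Λ D)†. Then for every z ∈ ℓ²(ℕ) with P_Λ D z ∈ ℓ¹(ℕ), ‖Q^⊥_𝒲 z‖₂ ≤ ‖(P_Λ D)†‖_{1→2} · ‖P_Λ D z‖₁. -/
noncomputable section

open scoped ComplexConjugate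

/-- The Hilbert space `ℓ²(ℕ)` over `ℂ`. -/
abbrev H : Type := lp (fun _ : ℕ => ℂ) 2

/-- The canonical basis vectors of `ℓ²(ℕ)`. -/
def e (n : ℕ) : H := lp.single 2 n 1

/-- The `n`-th coordinate of `v ∈ ℓ²(ℕ)`. -/
def coord (n : ℕ) (v : H) : ℂ := (inner ℂ (e n) v : ℂ)

/-- `Pm` is the family of coordinate (orthogonal) projections: for every `S ⊆ ℕ`,
`Pm S` keeps the coordinates in `S` and sets all others to zero. -/
def IsCoordProj (Pm : Set ℕ → H →L[ℂ] H) : Prop :=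
  ∀ (S : Set ℕ) (v : H),
    (∀ n ∈ S, coord n (Pm S v) = coord n v) ∧ ∀ n ∉ S, coord n (Pm S v) = 0

/-!
Since `T G T = T`, the vector `z - G (T z)` lies in `Null T ⊆ 𝒲`, so by the best-approximation
property of `Q`, `‖z - Q z‖ ≤ ‖G (T z)‖`. Expanding `T z = ∑ (T z)ₙ eₙ` bounds `‖G (T z)‖` by
`(supⱼ ‖G eⱼ‖) · ‖T z‖₁`.
-/

section OrthogonalProjection

variable {𝕜 E : Type*} [RCLike 𝕜] [NormedAddCommGroup E] [InnerProductSpace 𝕜 E]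

lemma norm_sub_apply_le_norm_sub_of_isOrthogonalProjection (W : Submodule 𝕜 E) (Q : E →L[𝕜] E)
    (hQmem : ∀ v, Q v ∈ W) (hQfix : ∀ v ∈ W, Q v = v)
    (hQsa : ∀ u v : E, (inner 𝕜 (Q u) v : 𝕜) = inner 𝕜 u (Q v))
    (z w : E) (hw : w ∈ W) : ‖z - Q z‖ ≤ ‖z - w‖ := by
  have horth : ∀ v ∈ W, (inner 𝕜 (z - Q z) v : 𝕜) = 0 := fun v hv => by
    rw [inner_sub_left, hQsa, hQfix v hv, sub_self]
  have hpyth : ‖z - w‖ * ‖z - w‖ = ‖z - Q z‖ * ‖z - Q z‖ + ‖Q z - w‖ * ‖Q z - w‖ := by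
    rw [← norm_add_sq_eq_norm_sq_add_norm_sq_of_inner_eq_zero _ _
      (horth _ (W.sub_mem (hQmem z) hw)), sub_add_sub_cancel]
  exact (mul_self_le_mul_self_iff (norm_nonneg _) (norm_nonneg _)).2
    (hpyth ▸ le_add_of_nonneg_right (mul_self_nonneg _))

end OrthogonalProjection

lemma coord_eq_apply (n : ℕ) (v : H) : coord n v = v n := by
  simp [coord, e, lp.inner_single_left]

lemma norm_e (n : ℕ) : ‖e n‖ = 1 := by
  simp [e]

lemma lp_single_eq_smul_e (n : ℕ) (c : ℂ) : lp.single 2 n c = c • e n := by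
  simpa [e] using lp.single_smul (E := fun _ : ℕ => ℂ) 2 n c 1

section OneToTwoNorm

variable {F : Type*} [NormedAddCommGroup F] [NormedSpace ℂ F]

lemma bddAbove_range_norm_apply_e (G : H →L[ℂ] F) : BddAbove (Set.range fun j => ‖G (e j)‖) :=
  ⟨‖G‖, by rintro _ ⟨j, rfl⟩; simpa [norm_e] using G.le_opNorm (e j)⟩

lemma norm_apply_le_iSup_norm_apply_e_mul_tsum_norm_coord (G : H →L[ℂ] F) (y : H)
    (hy : Summable fun n => ‖coord n y‖) :
    ‖G y‖ ≤ (⨆ j, ‖G (e j)‖) * ∑' n, ‖coord n y‖ := by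
  set C := ⨆ j, ‖G (e j)‖
  have hterm : ∀ n, ‖G (lp.single 2 n (y n))‖ ≤ ‖coord n y‖ * C := fun n => by
    rw [lp_single_eq_smul_e, map_smul, norm_smul, coord_eq_apply]
    exact mul_le_mul_of_nonneg_left (le_ciSup (bddAbove_range_norm_apply_e G) n) (norm_nonneg _)
  calc ‖G y‖ ≤ ∑' n, ‖coord n y‖ * C :=
        (G.hasSum (lp.hasSum_single ENNReal.ofNat_ne_top y)).norm_le_of_bounded
          (hy.mul_right C).hasSum hterm
    _ = C * ∑' n, ‖coord n y‖ := by rw [tsum_mul_right, mul_comm]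

end OneToTwoNorm

theorem stmt6_general (D : H →L[ℂ] H) (Λ : Set ℕ)
    (Pm : Set ℕ → H →L[ℂ] H)
    (𝒲 : Submodule ℂ H)
    (hker : ∀ v : H, (Pm Λ).comp D v = 0 → v ∈ 𝒲)
    -- `Q` is the orthogonal projection onto `𝒲`
    (Q : H →L[ℂ] H) (hQmem : ∀ v, Q v ∈ 𝒲) (hQfix : ∀ v ∈ 𝒲, Q v = v)
    (hQsa : ∀ u v : H, (inner ℂ (Q u) v : ℂ) = inner ℂ u (Q v))
    -- `G` is a Moore–Penrose pseudoinverse of `T = P_Λ D`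
    (G : H →L[ℂ] H)
    (hTGT : ((Pm Λ).comp D).comp (G.comp ((Pm Λ).comp D)) = (Pm Λ).comp D)
    (z : H) (hz1 : Summable fun n => ‖coord n ((Pm Λ).comp D z)‖) :
    ‖z - Q z‖ ≤ (⨆ j, ‖G (e j)‖) * ∑' n, ‖coord n ((Pm Λ).comp D z)‖ := by
  set T := (Pm Λ).comp D
  have hnull : T (z - G (T z)) = 0 := by
    rw [map_sub, sub_eq_zero]
    exact (DFunLike.congr_fun hTGT z).symm
  calc ‖z - Q z‖ ≤ ‖z - (z - G (T z))‖ :=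
        norm_sub_apply_le_norm_sub_of_isOrthogonalProjection 𝒲 Q hQmem hQfix hQsa z _
          (hker _ hnull)
    _ = ‖G (T z)‖ := by rw [sub_sub_cancel]
    _ ≤ _ := norm_apply_le_iSup_norm_apply_e_mul_tsum_norm_coord G (T z) hz1

theorem stmt6 (D : H →L[ℂ] H) (Λ : Set ℕ)
    (Pm : Set ℕ → H →L[ℂ] H) (hPm : IsCoordProj Pm)
    (𝒲 : Submodule ℂ H) (h𝒲closed : IsClosed (𝒲 : Set H))
    (hker : ∀ v : H, (Pm Λ).comp D v = 0 → v ∈ 𝒲)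
    -- `Q` is the orthogonal projection onto `𝒲`
    (Q : H →L[ℂ] H) (hQmem : ∀ v, Q v ∈ 𝒲) (hQfix : ∀ v ∈ 𝒲, Q v = v)
    (hQsa : ∀ u v : H, (inner ℂ (Q u) v : ℂ) = inner ℂ u (Q v))
    -- `G` is a Moore–Penrose pseudoinverse of `T = P_Λ D`
    (G : H →L[ℂ] H)
    (hTGT : ((Pm Λ).comp D).comp (G.comp ((Pm Λ).comp D)) = (Pm Λ).comp D)
    (hGTG : G.comp (((Pm Λ).comp D).comp G) = G)
    (hTGsa : ∀ u v : H, (inner ℂ ((Pm Λ).comp D (G u)) v : ℂ) = inner ℂ u ((Pm Λ).comp D (G v)))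
    (hGTsa : ∀ u v : H, (inner ℂ (G ((Pm Λ).comp D u)) v : ℂ) = inner ℂ u (G ((Pm Λ).comp D v)))
    (z : H) (hz1 : Summable fun n => ‖coord n ((Pm Λ).comp D z)‖) :
    ‖z - Q z‖ ≤ (⨆ j, ‖G (e j)‖) * ∑' n, ‖coord n ((Pm Λ).comp D z)‖ :=
  stmt6_general D Λ Pm 𝒲 hker Q hQmem hQfix hQsa G hTGT z hz1

end
end

section
/- Fix N ∈ ℕ and let D : ℂ^N → ℂ^{N−1} be the finite-difference operator (Dx)_j = x_{j+1} − x_j. Let Λ^c = {t_1,…,t_{s−1}} ⊂ {1,…,N−1} with t_1 < ⋯ < t_{s−1}, Λ = {1,…,N−1}∖Λ^c, and let (P_Λ D)† : ℂ^{N−1} → ℂ^N be the Moore–Penrose pseudoinverse of P_Λ D. Then ‖(P_Λ D)†‖_{1→2} ≤ √N; equivalently, every column of (P_Λ D)† has Euclidean norm at most √N. -/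
open scoped ComplexConjugate

/-- Matrix entries of `P_Λ D` (rows `i ∈ {1,…,N-1}`, columns `j ∈ {1,…,N}`):
row `i` is `(…, -1, +1, …)` (with `-1` at column `i`) if `i ∈ Λ`, and zero otherwise. -/
def PLD (Λ : Finset ℕ) (i j : ℕ) : ℂ :=
  if i ∈ Λ then (if j = i + 1 then 1 else if j = i then -1 else 0) else 0

/-- `G : ℂ^{N-1} → ℂ^N` (rows `1,…,N`, columns `1,…,N-1`) is a Moore–Penrose
pseudoinverse of `P_Λ D`:  `TGT = T`, `GTG = G`, and `TG`, `GT` are self-adjoint. -/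
structure IsPseudoInv (N : ℕ) (Λ : Finset ℕ) (G : ℕ → ℕ → ℂ) : Prop where
  tgt : ∀ i ∈ Finset.Icc 1 (N - 1), ∀ j ∈ Finset.Icc 1 N,
    ∑ a ∈ Finset.Icc 1 N, ∑ b ∈ Finset.Icc 1 (N - 1),
      PLD Λ i a * G a b * PLD Λ b j = PLD Λ i j
  gtg : ∀ i ∈ Finset.Icc 1 N, ∀ j ∈ Finset.Icc 1 (N - 1),
    ∑ a ∈ Finset.Icc 1 (N - 1), ∑ b ∈ Finset.Icc 1 N,
      G i a * PLD Λ a b * G b j = G i j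
  tg_sa : ∀ i ∈ Finset.Icc 1 (N - 1), ∀ j ∈ Finset.Icc 1 (N - 1),
    conj (∑ a ∈ Finset.Icc 1 N, PLD Λ j a * G a i) =
      ∑ a ∈ Finset.Icc 1 N, PLD Λ i a * G a j
  gt_sa : ∀ i ∈ Finset.Icc 1 N, ∀ j ∈ Finset.Icc 1 N,
    conj (∑ b ∈ Finset.Icc 1 (N - 1), G j b * PLD Λ b i) =
      ∑ b ∈ Finset.Icc 1 (N - 1), G i b * PLD Λ b j

/-!
Write `T = P_Λ D`. For `j ∈ Λ` the step vector `u = 1_{(j, N]}` satisfies `T u = e_j`, so the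
`j`-th column of `G` is `G T u`. Since `G T` is self-adjoint and idempotent, it is an orthogonal
projection, hence `‖G T u‖ ≤ ‖u‖ ≤ √N`. For `j ∉ Λ` the `j`-th row of `T` vanishes, and
`G e_j = G (T G) e_j = G (T G)ᴴ e_j = G Gᴴ Tᴴ e_j = 0`.
-/

open scoped Matrix

namespace Matrix

variable {𝕜 m n : Type*} [RCLike 𝕜] [Fintype m] [Fintype n]

theorem isStarProjection_mul_of_mul_mul_eq {G : Matrix n m 𝕜} {T : Matrix m n 𝕜}
    (hGTG : G * T * G = G) (hGT : (G * T)ᴴ = G * T) : IsStarProjection (G * T) where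
  isIdempotentElem := by rw [IsIdempotentElem, ← Matrix.mul_assoc, hGTG]
  isSelfAdjoint := hGT

theorem norm_toLp_mulVec_mulVec_le [DecidableEq n] {G : Matrix n m 𝕜} {T : Matrix m n 𝕜}
    (hGTG : G * T * G = G) (hGT : (G * T)ᴴ = G * T) (v : n → 𝕜) :
    ‖WithLp.toLp 2 (G *ᵥ T *ᵥ v)‖ ≤ ‖WithLp.toLp 2 v‖ := by
  have hP := (isStarProjection_mul_of_mul_mul_eq hGTG hGT).map (toEuclideanCLM (n := n) (𝕜 := 𝕜))
  calc ‖WithLp.toLp 2 (G *ᵥ T *ᵥ v)‖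
      = ‖toEuclideanCLM (n := n) (𝕜 := 𝕜) (G * T) (WithLp.toLp 2 v)‖ := by
        rw [toEuclideanCLM_toLp, mulVec_mulVec]
    _ ≤ ‖WithLp.toLp 2 v‖ :=
        (ContinuousLinearMap.le_opNorm _ _).trans (mul_le_of_le_one_left (norm_nonneg _) hP.norm_le)

theorem mulVec_single_eq_zero_of_row_eq_zero [DecidableEq m] {G : Matrix n m 𝕜}
    {T : Matrix m n 𝕜} (hGTG : G * T * G = G) (hTG : (T * G)ᴴ = T * G) {j : m} (hj : T j = 0) :
    G *ᵥ Pi.single j 1 = 0 := by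
  have hTadj : Tᴴ *ᵥ Pi.single j 1 = 0 := by
    ext i
    simp [conjTranspose_apply, hj]
  rw [← hGTG, Matrix.mul_assoc, ← hTG, conjTranspose_mul, ← mulVec_mulVec, ← mulVec_mulVec, hTadj,
    mulVec_zero, mulVec_zero]

end Matrix

open Finset Matrix

theorem sqrt_sum_norm_sq_eq_norm_toLp {ι 𝕜 : Type*} [RCLike 𝕜] (s : Finset ι) (f : ι → 𝕜) :
    √(∑ i ∈ s, ‖f i‖ ^ 2) = ‖WithLp.toLp 2 (fun i : s => f i)‖ := by
  rw [EuclideanSpace.norm_eq, ← Finset.sum_coe_sort s]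

def unitStep (j a : ℕ) : ℂ := if j < a then 1 else 0

theorem sum_norm_unitStep_sq_le (N j : ℕ) : ∑ a ∈ Icc 1 N, ‖unitStep j a‖ ^ 2 ≤ N := by
  calc ∑ a ∈ Icc 1 N, ‖unitStep j a‖ ^ 2 ≤ ∑ _a ∈ Icc 1 N, (1 : ℝ) :=
        sum_le_sum fun a _ => by unfold unitStep; split_ifs <;> simp
    _ = N := by simp

theorem PLD_of_mem {Λ : Finset ℕ} {i : ℕ} (hi : i ∈ Λ) (a : ℕ) :
    PLD Λ i a = (if a = i + 1 then 1 else 0) - (if a = i then 1 else 0) := by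
  by_cases h : a = i + 1
  · simp [PLD, hi, h]
  · by_cases h' : a = i <;> simp [PLD, hi, h, h']

theorem sum_PLD_mul_unitStep {N : ℕ} {Λ : Finset ℕ} {i j : ℕ} (hi : i ∈ Icc 1 (N - 1))
    (hj : j ∈ Λ) : ∑ a ∈ Icc 1 N, PLD Λ i a * unitStep j a = if i = j then 1 else 0 := by
  rw [mem_Icc] at hi
  by_cases hiΛ : i ∈ Λ
  · simp_rw [PLD_of_mem hiΛ, sub_mul, ite_mul, one_mul, zero_mul, sum_sub_distrib, sum_ite_eq',
      mem_Icc, unitStep]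
    split_ifs <;> first | omega | norm_num
  · have hij : i ≠ j := fun h => hiΛ (h ▸ hj)
    simp [PLD, hiΛ, hij]

def diffMatrix (N : ℕ) (Λ : Finset ℕ) : Matrix (Icc 1 (N - 1)) (Icc 1 N) ℂ :=
  Matrix.of fun i a => PLD Λ i a

def pinvMatrix (N : ℕ) (G : ℕ → ℕ → ℂ) : Matrix (Icc 1 N) (Icc 1 (N - 1)) ℂ :=
  Matrix.of fun a i => G a i

theorem diffMatrix_mulVec_unitStep {N : ℕ} {Λ : Finset ℕ} {j : ℕ} (hj : j ∈ Icc 1 (N - 1))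
    (hjΛ : j ∈ Λ) :
    diffMatrix N Λ *ᵥ (fun a : Icc 1 N => unitStep j a) = Pi.single ⟨j, hj⟩ 1 := by
  ext i
  simp only [Pi.single_apply, Subtype.ext_iff]
  rw [← sum_PLD_mul_unitStep i.2 hjΛ, ← Finset.sum_coe_sort]
  rfl

theorem diffMatrix_row_eq_zero {N : ℕ} {Λ : Finset ℕ} {j : ℕ} (hj : j ∈ Icc 1 (N - 1))
    (hjΛ : j ∉ Λ) : diffMatrix N Λ ⟨j, hj⟩ = 0 := by
  ext a
  simp [diffMatrix, PLD, hjΛ]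

theorem pinvMatrix_mulVec_single (N : ℕ) (G : ℕ → ℕ → ℂ) {j : ℕ} (hj : j ∈ Icc 1 (N - 1)) :
    pinvMatrix N G *ᵥ Pi.single ⟨j, hj⟩ 1 = fun a : Icc 1 N => G a j := by
  rw [mulVec_single_one]
  rfl

namespace IsPseudoInv

variable {N : ℕ} {Λ : Finset ℕ} {G : ℕ → ℕ → ℂ}

theorem pinvMatrix_mul_mul_self (hG : IsPseudoInv N Λ G) :
    pinvMatrix N G * diffMatrix N Λ * pinvMatrix N G = pinvMatrix N G := by
  ext i j
  simp only [mul_apply, pinvMatrix, diffMatrix, of_apply, sum_mul]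
  rw [sum_comm]
  simpa only [← Finset.sum_coe_sort (Icc 1 N), ← Finset.sum_coe_sort (Icc 1 (N - 1))]
    using hG.gtg i i.2 j j.2

theorem conjTranspose_pinvMatrix_mul (hG : IsPseudoInv N Λ G) :
    (pinvMatrix N G * diffMatrix N Λ)ᴴ = pinvMatrix N G * diffMatrix N Λ := by
  ext i j
  simpa only [conjTranspose_apply, Complex.star_def, mul_apply, pinvMatrix, diffMatrix, of_apply,
    ← Finset.sum_coe_sort (Icc 1 (N - 1))] using hG.gt_sa i i.2 j j.2

theorem conjTranspose_mul_pinvMatrix (hG : IsPseudoInv N Λ G) :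
    (diffMatrix N Λ * pinvMatrix N G)ᴴ = diffMatrix N Λ * pinvMatrix N G := by
  ext i j
  simpa only [conjTranspose_apply, Complex.star_def, mul_apply, pinvMatrix, diffMatrix, of_apply,
    ← Finset.sum_coe_sort (Icc 1 N)] using hG.tg_sa i i.2 j j.2

end IsPseudoInv

theorem stmt10_general (N : ℕ) (Λ : Finset ℕ)
    (G : ℕ → ℕ → ℂ) (hG : IsPseudoInv N Λ G) :
    ∀ j ∈ Finset.Icc 1 (N - 1),
      Real.sqrt (∑ i ∈ Finset.Icc 1 N, ‖G i j‖ ^ 2) ≤ Real.sqrt N := by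
  intro j hj
  rw [sqrt_sum_norm_sq_eq_norm_toLp, ← pinvMatrix_mulVec_single N G hj]
  by_cases hjΛ : j ∈ Λ
  · rw [← diffMatrix_mulVec_unitStep hj hjΛ]
    calc _ ≤ ‖WithLp.toLp 2 (fun a : Icc 1 N => unitStep j a)‖ :=
          norm_toLp_mulVec_mulVec_le hG.pinvMatrix_mul_mul_self hG.conjTranspose_pinvMatrix_mul _
      _ ≤ √N := by
          rw [← sqrt_sum_norm_sq_eq_norm_toLp]
          exact Real.sqrt_le_sqrt (sum_norm_unitStep_sq_le N j)
  · rw [mulVec_single_eq_zero_of_row_eq_zero hG.pinvMatrix_mul_mul_self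
      hG.conjTranspose_mul_pinvMatrix (diffMatrix_row_eq_zero hj hjΛ)]
    simp

theorem stmt10 (N : ℕ) (Λ : Finset ℕ) (hΛ : Λ ⊆ Finset.Icc 1 (N - 1))
    (G : ℕ → ℕ → ℂ) (hG : IsPseudoInv N Λ G) :
    ∀ j ∈ Finset.Icc 1 (N - 1),
      Real.sqrt (∑ i ∈ Finset.Icc 1 N, ‖G i j‖ ^ 2) ≤ Real.sqrt N :=
  stmt10_general N Λ G hG
end
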